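/- Let 𝔄 be the unital associative ℂ-algebra generated by U, V, Y, R subject to the relations [V,Y] = −{U,Y}, [U,Y] = −{Y,Y}, [U,V] = {V,Y} − 2{Y,Y}, [R,Y] = {U,U} − {U,V} + {V,Y}, [R,V] = 2{V,Y} − {Y,Y} − {V,V} − {U,R}, [R,U] = {U,V} + 2{V,Y} − 2{U,Y} − {V,V} − {Y,Y} − {R,Y}. Then the elements Q₁ = U² − {V,Y} + 3Y² and Q₂ = U² + V² − {U,V} − {U,Y} − {R,Y} are central in 𝔄, i.e. Q₁ and Q₂ commute with each of U, V, Y, R. -/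

import Mathlib

/-!
Centrality holds in every ring containing elements `u, v, y, r` that satisfy the six relations:
for each generator `g`, the degree-3 element `Q g - g Q` is a two-sided combination
`∑ (a D + D b)` of the relation defects `D = lhs - rhs`, with `a, b` generators. The coefficients
are found by solving the linear system this gives in the free algebra.
-/

noncomputable section

/-- The free algebra on the four generators U, V, Y, R. -/
abbrev FreeStab := FreeAlgebra ℂ (Fin 4)

namespace StabStar

def U : FreeStab := FreeAlgebra.ι ℂ 0
def V : FreeStab := FreeAlgebra.ι ℂ 1
def Y : FreeStab := FreeAlgebra.ι ℂ 2
def R : FreeStab := FreeAlgebra.ι ℂ 3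

/-- Commutator [a,b] = ab − ba. -/
def com (a b : FreeStab) : FreeStab := a * b - b * a

/-- Anticommutator {a,b} = ab + ba. -/
def acom (a b : FreeStab) : FreeStab := a * b + b * a

/-- The six defining relations of the universal presentation 𝔄 of 𝔰𝔱𝔞𝔟*. -/
inductive Rel : FreeStab → FreeStab → Prop
  | r1 : Rel (com V Y) (-(acom U Y))
  | r2 : Rel (com U Y) (-(acom Y Y))
  | r3 : Rel (com U V) (acom V Y - 2 * acom Y Y)
  | r4 : Rel (com R Y) (acom U U - acom U V + acom V Y)
  | r5 : Rel (com R V) (2 * acom V Y - acom Y Y - acom V V - acom U R)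
  | r6 : Rel (com R U)
      (acom U V + 2 * acom V Y - 2 * acom U Y - acom V V - acom Y Y - acom R Y)

end StabStar

/-- The universal presentation 𝔄 of the algebra 𝔰𝔱𝔞𝔟*. -/
abbrev StabStarAlg := RingQuot StabStar.Rel

namespace StabStar

variable {A : Type*} [Ring A]

structure Relations (u v y r : A) : Prop where
  vy : v * y - y * v = -(u * y + y * u)
  uy : u * y - y * u = -(y * y + y * y)
  uv : u * v - v * u = v * y + y * v - 2 * (y * y + y * y)
  ry : r * y - y * r = u * u + u * u - (u * v + v * u) + (v * y + y * v)
  rv : r * v - v * r = 2 * (v * y + y * v) - (y * y + y * y) - (v * v + v * v) - (u * r + r * u)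
  ru : r * u - u * r = u * v + v * u + 2 * (v * y + y * v) - 2 * (u * y + y * u) - (v * v + v * v)
    - (y * y + y * y) - (r * y + y * r)

def casimir₁ (u v y : A) : A := u ^ 2 - (v * y + y * v) + 3 * y ^ 2

def casimir₂ (u v y r : A) : A :=
  u ^ 2 + v ^ 2 - (u * v + v * u) - (u * y + y * u) - (r * y + y * r)

section casimir₁

variable {u v y : A}

theorem commute_casimir₁_y (hvy : v * y - y * v = -(u * y + y * u))
    (huy : u * y - y * u = -(y * y + y * y)) : Commute (casimir₁ u v y) y := by
  unfold casimir₁ Commute SemiconjBy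
  linear_combination (norm := noncomm_ring)
    -y * hvy - hvy * y + u * huy + y * huy + huy * u - huy * y

theorem commute_casimir₁_u (hvy : v * y - y * v = -(u * y + y * u))
    (huy : u * y - y * u = -(y * y + y * y))
    (huv : u * v - v * u = v * y + y * v - 2 * (y * y + y * y)) : Commute (casimir₁ u v y) u := by
  unfold casimir₁ Commute SemiconjBy
  linear_combination (norm := noncomm_ring)
    y * hvy - hvy * y + v * huy - 2 * (y * huy) + huy * v - 2 * huy * y + y * huv + huv * y

theorem commute_casimir₁_v (hvy : v * y - y * v = -(u * y + y * u))
    (huy : u * y - y * u = -(y * y + y * y))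
    (huv : u * v - v * u = v * y + y * v - 2 * (y * y + y * y)) : Commute (casimir₁ u v y) v := by
  unfold casimir₁ Commute SemiconjBy
  linear_combination (norm := noncomm_ring)
    v * hvy - 2 * (y * hvy) + hvy * v - 2 * hvy * y + 2 * (y * huy) - 2 * huy * y + u * huv
      - y * huv + huv * u + huv * y

end casimir₁

namespace Relations

variable {u v y r : A}

theorem commute_casimir₁_r (h : Relations u v y r) : Commute (casimir₁ u v y) r := by
  unfold casimir₁ Commute SemiconjBy
  linear_combination (norm := noncomm_ring)
    r * h.vy + 2 * h.vy * u - h.vy * r - 2 * (u * h.uy) + 3 * (v * h.uy) + h.uy * v - 4 * h.uy * y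
      + 2 * h.uy * r + 3 * (u * h.uv) - 2 * (v * h.uv) + h.uv * u + 2 * h.uv * y + 2 * h.ry * v
      - 2 * h.ry * y + 2 * (y * h.rv) - u * h.ru - y * h.ru - h.ru * u - h.ru * y

theorem commute_casimir₂_u (h : Relations u v y r) : Commute (casimir₂ u v y r) u := by
  unfold casimir₂ Commute SemiconjBy
  linear_combination (norm := noncomm_ring)
    -u * h.vy - v * h.vy - r * h.vy + h.vy * u - h.vy * v + h.vy * r + 2 * (u * h.uy) + v * h.uy
      + 2 * h.uy * u - h.uy * v - u * h.uv - h.uv * u + v * h.ry - h.ry * v - y * h.rv + h.rv * y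

theorem commute_casimir₂_v (h : Relations u v y r) : Commute (casimir₂ u v y r) v := by
  unfold casimir₂ Commute SemiconjBy
  linear_combination (norm := noncomm_ring)
    v * h.vy - y * h.vy + r * h.vy - h.vy * v + h.vy * y + h.vy * r + v * h.uy - y * h.uy
      + h.uy * v - h.uy * y - v * h.uv + y * h.uv - h.uv * v + h.uv * y + u * h.ry - h.ry * u
      - y * h.rv - h.rv * y

theorem commute_casimir₂_y (h : Relations u v y r) : Commute (casimir₂ u v y r) y := by
  unfold casimir₂ Commute SemiconjBy
  linear_combination (norm := noncomm_ring)
    v * h.vy - y * h.vy - 2 * h.vy * u + h.vy * v + h.vy * y - u * h.uy - v * h.uy + h.uy * u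
      - h.uy * v - y * h.ry - h.ry * y

theorem commute_casimir₂_r (h : Relations u v y r) : Commute (casimir₂ u v y r) r := by
  unfold casimir₂ Commute SemiconjBy
  linear_combination (norm := noncomm_ring)
    u * h.vy - v * h.vy - h.vy * u - h.vy * v + u * h.uy - v * h.uy + h.uy * u + h.uy * v
      - u * h.uv + v * h.uv - h.uv * u - h.uv * v + r * h.ry + h.ry * r + 2 * (u * h.rv)
      - v * h.rv - y * h.rv - h.rv * v + h.rv * y - u * h.ru + v * h.ru + h.ru * u + h.ru * v

end Relations

theorem relations_mkAlgHom :
    Relations (RingQuot.mkAlgHom ℂ Rel U) (RingQuot.mkAlgHom ℂ Rel V)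
      (RingQuot.mkAlgHom ℂ Rel Y) (RingQuot.mkAlgHom ℂ Rel R) := by
  have h₁ := RingQuot.mkAlgHom_rel ℂ Rel.r1
  have h₂ := RingQuot.mkAlgHom_rel ℂ Rel.r2
  have h₃ := RingQuot.mkAlgHom_rel ℂ Rel.r3
  have h₄ := RingQuot.mkAlgHom_rel ℂ Rel.r4
  have h₅ := RingQuot.mkAlgHom_rel ℂ Rel.r5
  have h₆ := RingQuot.mkAlgHom_rel ℂ Rel.r6
  simp only [com, acom, map_sub, map_add, map_mul, map_neg, map_ofNat] at h₁ h₂ h₃ h₄ h₅ h₆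
  exact ⟨h₁, h₂, h₃, h₄, h₅, h₆⟩

end StabStar

theorem stmt14 :
    let m := RingQuot.mkAlgHom ℂ StabStar.Rel
    let u := m StabStar.U; let v := m StabStar.V; let y := m StabStar.Y; let r := m StabStar.R
    let Q₁ := u ^ 2 - (v * y + y * v) + 3 * y ^ 2
    let Q₂ := u ^ 2 + v ^ 2 - (u * v + v * u) - (u * y + y * u) - (r * y + y * r)
    (Commute Q₁ u ∧ Commute Q₁ v ∧ Commute Q₁ y ∧ Commute Q₁ r) ∧
    (Commute Q₂ u ∧ Commute Q₂ v ∧ Commute Q₂ y ∧ Commute Q₂ r) := by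
  intro m u v y r Q₁ Q₂
  have h : StabStar.Relations u v y r := StabStar.relations_mkAlgHom
  exact ⟨⟨StabStar.commute_casimir₁_u h.vy h.uy h.uv, StabStar.commute_casimir₁_v h.vy h.uy h.uv,
    StabStar.commute_casimir₁_y h.vy h.uy, h.commute_casimir₁_r⟩,
    ⟨h.commute_casimir₂_u, h.commute_casimir₂_v, h.commute_casimir₂_y, h.commute_casimir₂_r⟩⟩
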